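/- (Rendl–Wolkowicz eigenvalue reformulation of TRS) For A not positive definite, the optimal value of the trust-region subproblem min{ xᵀAx − 2aᵀx : ‖x‖² ≤ Δ } equals the supremum over t ∈ ℝ of (Δ + 1)·λmin(D(t)) − t subject to λmin(D(t)) ≤ 0, where D(t) = [[t, −aᵀ],[−a, A]]. -/

import Mathlib

open Matrix

/-- The smallest eigenvalue of a real (symmetric) matrix. -/
noncomputable def lambdaMin {ι : Type} [Fintype ι] (M : Matrix ι ι ℝ) : ℝ :=
  sInf {μ : ℝ | ∃ v : ι → ℝ, v ≠ 0 ∧ M.mulVec v = μ • v}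

/-- The multiplicity of the smallest eigenvalue: the dimension of Null(M - λmin(M)·I). -/
noncomputable def eigMult {ι : Type} [Fintype ι] [DecidableEq ι] (M : Matrix ι ι ℝ) : ℕ :=
  Module.finrank ℝ (LinearMap.ker (M - lambdaMin M • (1 : Matrix ι ι ℝ)).mulVecLin)

/-- The bordered matrix D(t) = [[t, -aᵀ],[-a, A]]. -/
noncomputable def borderD {n : ℕ} (A : Matrix (Fin n) (Fin n) ℝ) (a : Fin n → ℝ) (t : ℝ) :
    Matrix (Unit ⊕ Fin n) (Unit ⊕ Fin n) ℝ :=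
  Matrix.fromBlocks (Matrix.of fun (_ : Unit) (_ : Unit) => t)
    (Matrix.of fun (_ : Unit) (j : Fin n) => -a j)
    (Matrix.of fun (i : Fin n) (_ : Unit) => -a i) A

/-- The bordered matrix D(t,λ) = [[t, (-a + (λ/2)b)ᵀ],[-a + (λ/2)b, A]]. -/
noncomputable def borderD2 {n : ℕ} (A : Matrix (Fin n) (Fin n) ℝ) (a b : Fin n → ℝ)
    (t l : ℝ) : Matrix (Unit ⊕ Fin n) (Unit ⊕ Fin n) ℝ :=
  borderD A (fun j => a j - (l / 2) * b j) t

/-- The objective xᵀAx - 2aᵀx. -/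
noncomputable def objQ {n : ℕ} (A : Matrix (Fin n) (Fin n) ℝ) (a : Fin n → ℝ)
    (x : Fin n → ℝ) : ℝ :=
  x ⬝ᵥ A.mulVec x - 2 * (a ⬝ᵥ x)

/-- The optimal value p* of eTRS. -/
noncomputable def pstar {n : ℕ} (A : Matrix (Fin n) (Fin n) ℝ) (a b : Fin n → ℝ)
    (c Δ : ℝ) : ℝ :=
  sInf {v : ℝ | ∃ x : Fin n → ℝ, x ⬝ᵥ x ≤ Δ ∧ b ⬝ᵥ x ≤ c ∧ v = objQ A a x}

/-- The Lagrangian of eTRS. -/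
noncomputable def lagr {n : ℕ} (A : Matrix (Fin n) (Fin n) ℝ) (a b : Fin n → ℝ)
    (c Δ : ℝ) (x : Fin n → ℝ) (l1 l2 : ℝ) : ℝ :=
  objQ A a x + l1 * (x ⬝ᵥ x - Δ) + l2 * (b ⬝ᵥ x - c)

/-- The Lagrangian dual value d* of eTRS:
the supremum over λ1, λ2 ≥ 0 of inf_x of the Lagrangian, encoded as the supremum of all
values that are lower bounds of the Lagrangian for some admissible multipliers. -/
noncomputable def dstar {n : ℕ} (A : Matrix (Fin n) (Fin n) ℝ) (a b : Fin n → ℝ)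
    (c Δ : ℝ) : ℝ :=
  sSup {v : ℝ | ∃ l1 l2 : ℝ, 0 ≤ l1 ∧ 0 ≤ l2 ∧ ∀ x : Fin n → ℝ, v ≤ lagr A a b c Δ x l1 l2}

/-- x is a global optimal solution of eTRS. -/
def isOptimal {n : ℕ} (A : Matrix (Fin n) (Fin n) ℝ) (a b : Fin n → ℝ)
    (c Δ : ℝ) (x : Fin n → ℝ) : Prop :=
  x ⬝ᵥ x ≤ Δ ∧ b ⬝ᵥ x ≤ c ∧
    ∀ y : Fin n → ℝ, y ⬝ᵥ y ≤ Δ → b ⬝ᵥ y ≤ c → objQ A a x ≤ objQ A a y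

/-- The dual objective k(t,λ) = (Δ+1)·λmin(D(t,λ)) - t - λc. -/
noncomputable def ktl {n : ℕ} (A : Matrix (Fin n) (Fin n) ℝ) (a b : Fin n → ℝ)
    (c Δ : ℝ) (t l : ℝ) : ℝ :=
  (Δ + 1) * lambdaMin (borderD2 A a b t l) - t - l * c

/-!
Weak duality: for every `t` with `λmin(D(t)) ≤ 0` and every `x` with `‖x‖² ≤ Δ`, testing
`λmin(D(t))` against the vector `(1, x)` gives `(Δ + 1) λmin(D(t)) - t ≤ xᵀAx - 2aᵀx`.

No gap: minimise the objective over the (compact) sphere `‖x‖² = Δ`. Comparing the minimiser `x`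
with its reflections `x - 2 (xᵀd / dᵀd) d`, which stay on the sphere, gives a multiplier `μ` with
`(A + μI) x = a` and `A + μI ⪰ 0`; as `A` is not positive definite, `μ ≥ 0`. Then `(1, x)` is an
eigenvector of `D(aᵀx - μ)` for its smallest eigenvalue `-μ ≤ 0`, and the dual objective at
`t = aᵀx - μ` equals the objective at `x`.
-/

section DotProduct

variable {ι : Type} [Fintype ι]

theorem dotProduct_self_pos_of_ne_zero {v : ι → ℝ} (hv : v ≠ 0) : 0 < v ⬝ᵥ v := by
  simpa using dotProduct_self_star_pos_iff.mpr hv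

theorem dotProduct_add_smul_self (x d : ι → ℝ) (s : ℝ) :
    (x + s • d) ⬝ᵥ (x + s • d) = x ⬝ᵥ x + 2 * s * (x ⬝ᵥ d) + s ^ 2 * (d ⬝ᵥ d) := by
  simp only [dotProduct_add, add_dotProduct, dotProduct_smul, smul_dotProduct, smul_eq_mul,
    dotProduct_comm d x]
  ring

theorem Matrix.IsHermitian.dotProduct_mulVec_comm {M : Matrix ι ι ℝ} (hM : M.IsHermitian)
    (x z : ι → ℝ) : x ⬝ᵥ M *ᵥ z = z ⬝ᵥ M *ᵥ x := by
  rw [dotProduct_mulVec, ← mulVec_transpose, ← conjTranspose_eq_transpose_of_trivial, hM,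
    dotProduct_comm]

theorem isCompact_setOf_dotProduct_self_eq (Δ : ℝ) : IsCompact {x : ι → ℝ | x ⬝ᵥ x = Δ} := by
  refine Metric.isCompact_of_isClosed_isBounded (isClosed_eq (by fun_prop) continuous_const) ?_
  refine (Metric.isBounded_closedBall (x := 0) (r := √Δ)).subset fun x hx => ?_
  rw [Metric.mem_closedBall, dist_zero_right, pi_norm_le_iff_of_nonneg (Real.sqrt_nonneg Δ)]
  intro i
  rw [Real.norm_eq_abs, ← hx]
  refine Real.abs_le_sqrt ?_
  simpa only [dotProduct, sq] using
    Finset.single_le_sum (fun j _ => mul_self_nonneg (x j)) (Finset.mem_univ i)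

end DotProduct

theorem nonneg_of_continuous_of_forall_pos {f : ℝ → ℝ} (hf : Continuous f)
    (h : ∀ ε > 0, 0 ≤ f ε) : 0 ≤ f 0 :=
  ge_of_tendsto (hf.continuousWithinAt (s := Set.Ioi 0)) (eventually_nhdsWithin_of_forall h)

section LambdaMin

variable {ι : Type} [Fintype ι] {M : Matrix ι ι ℝ}

theorem lambdaMin_eq_of_mulVec_eq {c : ℝ} {v : ι → ℝ}
    (hle : ∀ y, c * (y ⬝ᵥ y) ≤ y ⬝ᵥ M *ᵥ y) (hv : v ≠ 0) (hMv : M *ᵥ v = c • v) :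
    lambdaMin M = c := by
  have hlower : c ∈ lowerBounds {μ : ℝ | ∃ v : ι → ℝ, v ≠ 0 ∧ M *ᵥ v = μ • v} := by
    rintro μ ⟨w, hw, hMw⟩
    have h := hle w
    rw [hMw, dotProduct_smul, smul_eq_mul] at h
    exact le_of_mul_le_mul_right h (dotProduct_self_pos_of_ne_zero hw)
  exact le_antisymm (csInf_le ⟨c, hlower⟩ ⟨v, hv, hMv⟩) (le_csInf ⟨c, v, hv, hMv⟩ hlower)

theorem Matrix.IsHermitian.posSemidef_sub_smul_one [DecidableEq ι] (hM : M.IsHermitian) {c : ℝ}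
    (hc : ∀ i, c ≤ hM.eigenvalues i) : (M - c • 1).PosSemidef := by
  have hc1 : c • (1 : Matrix ι ι ℝ) =
      Unitary.conjStarAlgAut ℝ _ hM.eigenvectorUnitary (diagonal fun _ => c) := by
    rw [← smul_one_eq_diagonal, map_smul, map_one]
  rw [hM.spectral_theorem, hc1, ← map_sub, Unitary.conjStarAlgAut_apply,
    Unitary.isUnit_coe.posSemidef_star_right_conjugate_iff, diagonal_sub, posSemidef_diagonal_iff]
  simpa using hc

theorem Matrix.IsHermitian.lambdaMin_mul_dotProduct_self_le [DecidableEq ι] [Nonempty ι]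
    (hM : M.IsHermitian) (y : ι → ℝ) : lambdaMin M * (y ⬝ᵥ y) ≤ y ⬝ᵥ M *ᵥ y := by
  obtain ⟨i₀, -, hi₀⟩ := Finset.univ.exists_min_image hM.eigenvalues Finset.univ_nonempty
  have hpsd := hM.posSemidef_sub_smul_one fun i => hi₀ i (Finset.mem_univ i)
  have hle : ∀ w, hM.eigenvalues i₀ * (w ⬝ᵥ w) ≤ w ⬝ᵥ M *ᵥ w := fun w => by
    have := hpsd.dotProduct_mulVec_nonneg w
    simp only [star_trivial, sub_mulVec, smul_mulVec, one_mulVec, dotProduct_sub,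
      dotProduct_smul, smul_eq_mul] at this
    linarith
  have hv : ⇑(hM.eigenvectorBasis i₀) ≠ 0 := by
    simpa using hM.eigenvectorBasis.orthonormal.ne_zero i₀
  rw [lambdaMin_eq_of_mulVec_eq hle hv (hM.mulVec_eigenvectorBasis i₀)]
  exact hle y

end LambdaMin

section Bordered

variable {n : ℕ} {A : Matrix (Fin n) (Fin n) ℝ} {a : Fin n → ℝ}

theorem isHermitian_borderD (hA : A.IsHermitian) (a : Fin n → ℝ) (t : ℝ) :
    (borderD A a t).IsHermitian :=
  .fromBlocks (by ext; simp) (by ext; simp) hA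

theorem borderD_mulVec_sumElim (t c : ℝ) (z : Fin n → ℝ) :
    borderD A a t *ᵥ Sum.elim (fun _ => c) z =
      Sum.elim (fun _ => t * c - a ⬝ᵥ z) (A *ᵥ z - c • a) := by
  ext (_ | i)
  · simp [borderD, mulVec, dotProduct, sub_eq_add_neg]
  · simp [borderD, mulVec, dotProduct, sub_eq_add_neg]
    ring

theorem sumElim_dotProduct_borderD_mulVec (t c : ℝ) (z : Fin n → ℝ) :
    Sum.elim (fun _ => c) z ⬝ᵥ borderD A a t *ᵥ Sum.elim (fun _ => c) z =
      t * c ^ 2 - 2 * c * (a ⬝ᵥ z) + z ⬝ᵥ A *ᵥ z := by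
  rw [borderD_mulVec_sumElim, sumElim_dotProduct_sumElim, dotProduct_sub, dotProduct_smul,
    dotProduct_comm z a]
  simp only [dotProduct, Finset.univ_unique, Finset.sum_singleton, smul_eq_mul]
  ring

end Bordered

section TrustRegion

variable {n : ℕ} {A : Matrix (Fin n) (Fin n) ℝ} {a x : Fin n → ℝ}

theorem objQ_add_smul (hA : A.IsHermitian) (d : Fin n → ℝ) (s : ℝ) :
    objQ A a (x + s • d) =
      objQ A a x + 2 * s * (d ⬝ᵥ (A *ᵥ x - a)) + s ^ 2 * (d ⬝ᵥ A *ᵥ d) := by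
  simp only [objQ, mulVec_add, mulVec_smul, dotProduct_add, add_dotProduct, dotProduct_smul,
    smul_dotProduct, dotProduct_sub, smul_eq_mul, hA.dotProduct_mulVec_comm x d,
    dotProduct_comm a d]
  ring

theorem reflection_nonneg_of_isMinOn_sphere (hA : A.IsHermitian)
    (hmin : IsMinOn (objQ A a) {y | y ⬝ᵥ y = x ⬝ᵥ x} x) (μ : ℝ) (d : Fin n → ℝ) :
    0 ≤ (x ⬝ᵥ d) * ((x ⬝ᵥ d) * (d ⬝ᵥ A *ᵥ d + μ * (d ⬝ᵥ d)) -
      (d ⬝ᵥ d) * (d ⬝ᵥ (A *ᵥ x + μ • x - a))) := by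
  rcases eq_or_ne d 0 with rfl | hd
  · simp
  have hD := dotProduct_self_pos_of_ne_zero hd
  set s := -2 * (x ⬝ᵥ d) / (d ⬝ᵥ d) with hs
  have hy : (x + s • d) ⬝ᵥ (x + s • d) = x ⬝ᵥ x := by
    rw [dotProduct_add_smul_self, hs]
    field_simp
    ring
  have h : objQ A a x ≤ objQ A a (x + s • d) := hmin hy
  rw [objQ_add_smul hA] at h
  have key : (x ⬝ᵥ d) * ((x ⬝ᵥ d) * (d ⬝ᵥ A *ᵥ d + μ * (d ⬝ᵥ d)) -
      (d ⬝ᵥ d) * (d ⬝ᵥ (A *ᵥ x + μ • x - a))) =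
      (d ⬝ᵥ d) ^ 2 / 4 * (2 * s * (d ⬝ᵥ (A *ᵥ x - a)) + s ^ 2 * (d ⬝ᵥ A *ᵥ d)) := by
    simp only [hs, dotProduct_sub, dotProduct_add, dotProduct_smul, smul_eq_mul,
      dotProduct_comm d x]
    field_simp
    ring
  rw [key]
  have : 0 ≤ 2 * s * (d ⬝ᵥ (A *ᵥ x - a)) + s ^ 2 * (d ⬝ᵥ A *ᵥ d) := by linarith
  positivity

theorem exists_eq_mulVec_add_smul_of_isMinOn_sphere (hA : A.IsHermitian) (hx : x ≠ 0)
    (hmin : IsMinOn (objQ A a) {y | y ⬝ᵥ y = x ⬝ᵥ x} x) : ∃ μ : ℝ, a = A *ᵥ x + μ • x := by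
  have hΔ := dotProduct_self_pos_of_ne_zero hx
  set μ := (a ⬝ᵥ x - x ⬝ᵥ A *ᵥ x) / (x ⬝ᵥ x)
  set r := A *ᵥ x + μ • x - a with hr
  have hrx : r ⬝ᵥ x = 0 := by
    simp only [hr, sub_dotProduct, add_dotProduct, smul_dotProduct, smul_eq_mul, μ,
      dotProduct_comm (A *ᵥ x) x]
    field_simp
    ring
  -- reflecting along `r + ε • x` and dividing by `ε`, the limit `ε → 0⁺` gives `(r ⬝ᵥ r)² ≤ 0`
  have hlim : ∀ ε > (0 : ℝ), 0 ≤ ε * (x ⬝ᵥ x) * ((r + ε • x) ⬝ᵥ A *ᵥ (r + ε • x) +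
      μ * ((r + ε • x) ⬝ᵥ (r + ε • x))) - ((r + ε • x) ⬝ᵥ (r + ε • x)) * (r ⬝ᵥ r) := by
    intro ε hε
    have h := reflection_nonneg_of_isMinOn_sphere hA hmin μ (r + ε • x)
    have hxd : x ⬝ᵥ (r + ε • x) = ε * (x ⬝ᵥ x) := by
      rw [dotProduct_add, dotProduct_comm, hrx, dotProduct_smul, smul_eq_mul, zero_add]
    have hdr : (r + ε • x) ⬝ᵥ r = r ⬝ᵥ r := by
      rw [add_dotProduct, smul_dotProduct, dotProduct_comm x r, hrx, smul_zero, add_zero]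
    rw [hxd, ← hr, hdr] at h
    exact nonneg_of_mul_nonneg_right h (mul_pos hε hΔ)
  have h0 := nonneg_of_continuous_of_forall_pos (by fun_prop) hlim
  simp only [zero_smul, add_zero, zero_mul, zero_sub] at h0
  have hr0 : r = 0 := dotProduct_self_eq_zero.mp (by nlinarith [dotProduct_self_star_nonneg r])
  exact ⟨μ, (sub_eq_zero.mp hr0).symm⟩

theorem nonneg_quadratic_of_isMinOn_sphere (hA : A.IsHermitian) (hx : x ≠ 0)
    (hmin : IsMinOn (objQ A a) {y | y ⬝ᵥ y = x ⬝ᵥ x} x) {μ : ℝ} (ha : a = A *ᵥ x + μ • x)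
    (d : Fin n → ℝ) : 0 ≤ d ⬝ᵥ A *ᵥ d + μ * (d ⬝ᵥ d) := by
  have hsq : ∀ d, x ⬝ᵥ d ≠ 0 → 0 ≤ d ⬝ᵥ A *ᵥ d + μ * (d ⬝ᵥ d) := fun d hd => by
    have h := reflection_nonneg_of_isMinOn_sphere hA hmin μ d
    rw [← ha, sub_self, dotProduct_zero, mul_zero, sub_zero, ← mul_assoc] at h
    exact nonneg_of_mul_nonneg_right h (mul_self_pos.mpr hd)
  rcases ne_or_eq (x ⬝ᵥ d) 0 with hd | hd
  · exact hsq d hd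
  have hΔ := dotProduct_self_pos_of_ne_zero hx
  refine nonneg_of_continuous_of_forall_pos (f := fun ε : ℝ => (d + ε • x) ⬝ᵥ A *ᵥ (d + ε • x) +
    μ * ((d + ε • x) ⬝ᵥ (d + ε • x))) (by fun_prop) (fun ε hε => hsq _ ?_) |>.trans_eq (by simp)
  rw [dotProduct_add, hd, dotProduct_smul, smul_eq_mul, zero_add]
  exact (mul_pos hε hΔ).ne'

theorem exists_optimality_conditions (hA : A.IsHermitian) (hnpd : ¬ A.PosDef) (a : Fin n → ℝ)
    {Δ : ℝ} (hΔ : 0 < Δ) : ∃ (x : Fin n → ℝ) (μ : ℝ), x ⬝ᵥ x = Δ ∧ 0 ≤ μ ∧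
      a = A *ᵥ x + μ • x ∧ ∀ d, 0 ≤ d ⬝ᵥ A *ᵥ d + μ * (d ⬝ᵥ d) := by
  obtain ⟨w, hw, hwA⟩ : ∃ w, w ≠ 0 ∧ w ⬝ᵥ A *ᵥ w ≤ 0 := by
    by_contra! h
    exact hnpd (posDef_iff_dotProduct_mulVec.mpr ⟨hA, fun w hw => by simpa using h w hw⟩)
  have hw2 := dotProduct_self_pos_of_ne_zero hw
  have hne : {x : Fin n → ℝ | x ⬝ᵥ x = Δ}.Nonempty := by
    refine ⟨√(Δ / (w ⬝ᵥ w)) • w, ?_⟩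
    rw [Set.mem_ofPred_eq, dotProduct_smul, smul_dotProduct, smul_eq_mul, smul_eq_mul, ← mul_assoc,
      Real.mul_self_sqrt (by positivity), div_mul_cancel₀ _ hw2.ne']
  obtain ⟨x, hx, hmin⟩ := (isCompact_setOf_dotProduct_self_eq Δ).exists_isMinOn hne
    (by unfold objQ; fun_prop : Continuous (objQ A a)).continuousOn
  rw [Set.mem_ofPred_eq] at hx
  have hx0 : x ≠ 0 := by
    rintro rfl
    rw [dotProduct_zero] at hx
    linarith
  rw [← hx] at hmin
  obtain ⟨μ, ha⟩ := exists_eq_mulVec_add_smul_of_isMinOn_sphere hA hx0 hmin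
  have hpsd := nonneg_quadratic_of_isMinOn_sphere hA hx0 hmin ha
  have hμ : 0 ≤ μ := nonneg_of_mul_nonneg_left (by linarith [hpsd w]) hw2
  exact ⟨x, μ, hx, hμ, ha, hpsd⟩

end TrustRegion

section Duality

variable {n : ℕ} {A : Matrix (Fin n) (Fin n) ℝ} {a x : Fin n → ℝ}

theorem dual_le_objQ (hA : A.IsHermitian) {t Δ : ℝ} (ht : lambdaMin (borderD A a t) ≤ 0)
    (hx : x ⬝ᵥ x ≤ Δ) : (Δ + 1) * lambdaMin (borderD A a t) - t ≤ objQ A a x := by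
  have h := (isHermitian_borderD hA a t).lambdaMin_mul_dotProduct_self_le
    (Sum.elim (fun _ => 1) x)
  have h1 : (fun _ : Unit => (1 : ℝ)) ⬝ᵥ (fun _ => 1) = 1 := by simp [dotProduct]
  rw [sumElim_dotProduct_borderD_mulVec, sumElim_dotProduct_sumElim, h1] at h
  unfold objQ
  nlinarith [mul_le_mul_of_nonpos_left (by linarith : 1 + x ⬝ᵥ x ≤ Δ + 1) ht]

theorem lambdaMin_borderD_eq_neg (hA : A.IsHermitian) {μ : ℝ} (ha : a = A *ᵥ x + μ • x)
    (hpsd : ∀ d, 0 ≤ d ⬝ᵥ A *ᵥ d + μ * (d ⬝ᵥ d)) :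
    lambdaMin (borderD A a (a ⬝ᵥ x - μ)) = -μ := by
  refine lambdaMin_eq_of_mulVec_eq (v := Sum.elim (fun _ => 1) x) (fun y => ?_) ?_ ?_
  · have hy : y = Sum.elim (fun _ => y (Sum.inl ())) (y ∘ Sum.inr) := by
      ext (_ | i) <;> rfl
    set c := y (Sum.inl ())
    set z := y ∘ Sum.inr
    have hc : (fun _ : Unit => c) ⬝ᵥ (fun _ => c) = c * c := by simp [dotProduct]
    rw [hy, sumElim_dotProduct_borderD_mulVec, sumElim_dotProduct_sumElim, hc]
    -- the form of `D(aᵀx - μ) + μI` at `(c, z)` is the form of `A + μI` at `z - c x`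
    have key := hpsd (z - c • x)
    subst ha
    simp only [mulVec_sub, mulVec_smul, dotProduct_sub, sub_dotProduct, dotProduct_smul,
      smul_dotProduct, add_dotProduct, smul_eq_mul, dotProduct_comm (A *ᵥ x),
      hA.dotProduct_mulVec_comm x z, dotProduct_comm x z] at key ⊢
    linear_combination key
  · intro h
    simpa using congrFun h (Sum.inl ())
  · rw [borderD_mulVec_sumElim, ha]
    ext (_ | i) <;> simp

end Duality

theorem stmt5_general {n : ℕ} (A : Matrix (Fin n) (Fin n) ℝ) (hA : A.IsHermitian)
    (hnpd : ¬ A.PosDef) (a : Fin n → ℝ) (Δ : ℝ) (hΔ : 0 < Δ) :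
    sInf {v : ℝ | ∃ x : Fin n → ℝ, x ⬝ᵥ x ≤ Δ ∧ v = objQ A a x} =
      sSup {v : ℝ | ∃ t : ℝ, lambdaMin (borderD A a t) ≤ 0 ∧
        v = (Δ + 1) * lambdaMin (borderD A a t) - t} := by
  obtain ⟨x, μ, hx, hμ, ha, hpsd⟩ := exists_optimality_conditions hA hnpd a hΔ
  have heig := lambdaMin_borderD_eq_neg hA ha hpsd
  have hfeas : lambdaMin (borderD A a (a ⬝ᵥ x - μ)) ≤ 0 := by linarith
  have hax : a ⬝ᵥ x = x ⬝ᵥ A *ᵥ x + μ * Δ := by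
    rw [ha, add_dotProduct, smul_dotProduct, hx, dotProduct_comm, smul_eq_mul]
  have hval : (Δ + 1) * lambdaMin (borderD A a (a ⬝ᵥ x - μ)) - (a ⬝ᵥ x - μ) = objQ A a x := by
    rw [heig, objQ]
    linarith
  rw [IsLeast.csInf_eq (a := objQ A a x), IsGreatest.csSup_eq (a := objQ A a x)]
  · exact ⟨⟨_, hfeas, hval.symm⟩, by rintro _ ⟨t, ht, rfl⟩; exact dual_le_objQ hA ht hx.le⟩
  · exact ⟨⟨x, hx.le, rfl⟩, by rintro _ ⟨y, hy, rfl⟩; exact hval ▸ dual_le_objQ hA hfeas hy⟩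

/-- The Rendl–Wolkowicz eigenvalue reformulation of TRS. -/
theorem stmt5 {n : ℕ} (hn : 1 ≤ n) (A : Matrix (Fin n) (Fin n) ℝ) (hA : A.IsHermitian)
    (hnpd : ¬ A.PosDef) (a : Fin n → ℝ) (Δ : ℝ) (hΔ : 0 < Δ) :
    sInf {v : ℝ | ∃ x : Fin n → ℝ, x ⬝ᵥ x ≤ Δ ∧ v = objQ A a x} =
      sSup {v : ℝ | ∃ t : ℝ, lambdaMin (borderD A a t) ≤ 0 ∧
        v = (Δ + 1) * lambdaMin (borderD A a t) - t} :=
  stmt5_general A hA hnpd a Δ hΔ
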